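/- Let G be a graph and let w be a support vertex of G whose set of leaf neighbors is L_G(w) = {v_1, …, v_t} with t ≥ 1. Let H be the induced subgraph of G on V(G) ∖ (L_G(w) ∪ {w}). Suppose every vertex of N_G(w) ∖ L_G(w) is a support vertex of G. Then the domination polynomials satisfy D_G(x) = x^t·D_H(x) + Σ_{i=0}^{t−1} C(t−1, i)·(x^{i+2} + x^{i+1})·D_H(x); equivalently, D_G(x) = (x^t + x(x+1)^t)·D_H(x). -/

import Mathlib

open scoped Classical

/-- The family of all dominating sets of `G`, as a `Finset` of `Finset`s. -/
noncomputable def domSets {V : Type*} [Fintype V] (G : SimpleGraph V) :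
    Finset (Finset V) :=
  Finset.univ.filter fun S => ∀ v ∉ S, ∃ u ∈ S, G.Adj u v

/-- The average order of a dominating set of `G`. -/
noncomputable def avd {V : Type*} [Fintype V] (G : SimpleGraph V) : ℚ :=
  (∑ S ∈ domSets G, (S.card : ℚ)) / ((domSets G).card : ℚ)

/-- A leaf is a vertex of degree one. -/
noncomputable def IsLeaf {V : Type*} [Fintype V] (G : SimpleGraph V) (v : V) : Prop :=
  G.degree v = 1

/-- The set of leaf neighbors of `w` in `G`. -/
noncomputable def leafNbrSet {V : Type*} [Fintype V] (G : SimpleGraph V) (w : V) : Set V :=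
  {v | G.Adj w v ∧ IsLeaf G v}

/-- A support vertex is a vertex adjacent to at least one leaf. -/
noncomputable def IsSupport {V : Type*} [Fintype V] (G : SimpleGraph V) (w : V) : Prop :=
  ∃ v, G.Adj w v ∧ IsLeaf G v

/-- The domination polynomial of `G`, evaluated at `x`. -/
noncomputable def domPoly {V : Type*} [Fintype V] (G : SimpleGraph V) (x : ℚ) : ℚ :=
  ∑ S ∈ domSets G, x ^ S.card

/-!
Split a vertex set `S` of `G` into its trace on `W = L ∪ {w}`, where `L` is the set of leaves at
`w`, and its trace on the rest, which is a vertex set of `H`. `S` dominates `G` exactly when its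
trace on the rest dominates `H` and either `w ∈ S` or `L ⊆ S`. The only nontrivial point is that a
vertex `u` of `H` dominated in `G` by `w` alone is still dominated inside `H`: by hypothesis `u`
carries a leaf `z`, which lies outside `W` and belongs to `S` because its only neighbour `u` does
not. The admissible traces on `W` are `L` and the `2^t` sets containing `w`, which contribute
`x^t + x(x+1)^t`.
-/

open Finset

theorem sum_finset_eq_sum_powerset_sum_compl {V M : Type*} [Fintype V] [AddCommMonoid M]
    (s : Set V) [DecidablePred (· ∈ s)] [Fintype s] [Fintype ↥sᶜ]
    (f : Finset V → Finset ↥sᶜ → M) :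
    ∑ S : Finset V, f (S.filter (· ∈ s)) (S.subtype (· ∈ sᶜ)) =
      ∑ A ∈ s.toFinset.powerset, ∑ B : Finset ↥sᶜ, f A B := by
  rw [← sum_product']
  refine sum_nbij' (fun S => (S.filter (· ∈ s), S.subtype (· ∈ sᶜ)))
    (fun p => p.1 ∪ p.2.map (Function.Embedding.subtype _)) ?_ ?_ ?_ ?_ ?_
  · intro S _
    simp [subset_iff]
  · simp
  · intro S _
    simp only [subtype_map]
    exact filter_union_filter_not_eq _ S
  · rintro ⟨A, B⟩ h
    have hA : ∀ v ∈ A, v ∈ s := by simpa [subset_iff] using h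
    ext v <;> grind [Function.Embedding.subtype_apply]
  · intro S _
    rfl

theorem sum_powerset_insert_ite_or_subset {α R : Type*} [DecidableEq α] [CommSemiring R]
    {a : α} {s : Finset α} (ha : a ∉ s) (x : R) :
    ∑ A ∈ (insert a s).powerset, (if a ∈ A ∨ s ⊆ A then x ^ A.card else 0) =
      x ^ s.card + x * (x + 1) ^ s.card := by
  rw [sum_powerset_insert ha]
  have hwithout : ∀ A ∈ s.powerset,
      (if a ∈ A ∨ s ⊆ A then x ^ A.card else 0) = if A = s then x ^ A.card else 0 := by
    intro A hA
    have hAs := mem_powerset.1 hA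
    have haA : a ∉ A := fun h => ha (hAs h)
    simp only [haA, false_or, Subset.antisymm_iff, hAs, true_and]
  have hwith : ∀ A ∈ s.powerset,
      (if a ∈ insert a A ∨ s ⊆ insert a A then x ^ (insert a A).card else 0) = x * x ^ A.card := by
    intro A hA
    rw [if_pos (Or.inl (mem_insert_self a A)),
      card_insert_of_notMem fun h => ha (mem_powerset.1 hA h), pow_succ']
  have hbinom : ∑ A ∈ s.powerset, x ^ A.card = (x + 1) ^ s.card := by
    simpa using sum_pow_mul_eq_add_pow x 1 s
  rw [sum_congr rfl hwithout, sum_congr rfl hwith, sum_ite_eq', if_pos (mem_powerset_self s),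
    ← mul_sum, hbinom]

theorem sum_range_choose_mul_pow_add_pow {R : Type*} [CommSemiring R] (x : R) (n : ℕ) :
    ∑ i ∈ range (n + 1), (n.choose i : R) * (x ^ (i + 2) + x ^ (i + 1)) =
      x * (x + 1) ^ (n + 1) := by
  rw [pow_succ, add_pow, sum_mul, mul_sum]
  refine sum_congr rfl fun i _ => ?_
  rw [one_pow, mul_one]
  ring

section Graph

variable {V : Type*} {G : SimpleGraph V}

theorem mem_domSets [Fintype V] {S : Finset V} : S ∈ domSets G ↔ ∀ v ∉ S, ∃ u ∈ S, G.Adj u v := by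
  simp [domSets]

theorem mem_domSets_induce {s : Set V} [Fintype s] {S : Finset s} :
    S ∈ domSets (G.induce s) ↔ ∀ v ∉ S, ∃ u ∈ S, G.Adj u v :=
  mem_domSets

variable [Fintype V]

theorem IsLeaf.eq_of_adj {v u u' : V} (hv : IsLeaf G v) (hu : G.Adj u v) (hu' : G.Adj u' v) :
    u = u' := by
  have h : (G.neighborFinset v).card = 1 := by rwa [G.card_neighborFinset_eq_degree]
  exact card_le_one.1 h.le u (by simpa using hu.symm) u' (by simpa using hu'.symm)

theorem IsLeaf.mem_of_mem_domSets {S : Finset V} {u z : V} (hz : IsLeaf G z) (hu : G.Adj u z)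
    (huS : u ∉ S) (hS : S ∈ domSets G) : z ∈ S := by
  by_contra hzS
  obtain ⟨u', hu'S, hu'⟩ := mem_domSets.1 hS z hzS
  exact huS (hz.eq_of_adj hu' hu ▸ hu'S)

theorem eq_of_adj_of_mem_leafNbrSet {w u v : V} (hv : v ∈ leafNbrSet G w) (hu : G.Adj u v) :
    u = w :=
  hv.2.eq_of_adj hu hv.1

variable {w : V}

theorem exists_leaf_notMem_of_adj (hL : (leafNbrSet G w).Nonempty)
    (hsupp : ∀ u ∈ G.neighborSet w \ leafNbrSet G w, IsSupport G u)
    {v : V} (hv : v ∉ leafNbrSet G w ∪ {w}) (hwv : G.Adj w v) :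
    ∃ z ∉ leafNbrSet G w ∪ {w}, G.Adj v z ∧ IsLeaf G z := by
  simp only [Set.mem_union, Set.mem_singleton_iff, not_or] at hv ⊢
  obtain ⟨z, hvz, hz⟩ := hsupp v ⟨hwv, hv.1⟩
  refine ⟨z, ⟨fun hzL => hv.2 (eq_of_adj_of_mem_leafNbrSet hzL hvz), ?_⟩, hvz, hz⟩
  rintro rfl
  obtain ⟨v₀, hv₀⟩ := hL
  exact hv.1 (hz.eq_of_adj hv₀.1.symm hvz ▸ hv₀)

theorem subtype_mem_domSets_induce (hL : (leafNbrSet G w).Nonempty)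
    (hsupp : ∀ u ∈ G.neighborSet w \ leafNbrSet G w, IsSupport G u)
    {S : Finset V} (hS : S ∈ domSets G) :
    S.subtype (· ∈ (leafNbrSet G w ∪ {w})ᶜ) ∈ domSets (G.induce (leafNbrSet G w ∪ {w})ᶜ) := by
  rw [mem_domSets_induce]
  rintro ⟨v, hvW⟩ hvS
  rw [mem_subtype] at hvS
  obtain ⟨u, huS, huv⟩ := mem_domSets.1 hS v hvS
  by_cases huW : u ∈ (leafNbrSet G w ∪ {w})ᶜ
  · exact ⟨⟨u, huW⟩, mem_subtype.2 huS, huv⟩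
  have hvw : v ≠ w := fun h => hvW (Or.inr h)
  obtain huL | rfl := Set.notMem_compl_iff.1 huW
  · exact absurd (eq_of_adj_of_mem_leafNbrSet huL huv.symm) hvw
  obtain ⟨z, hzW, hvz, hz⟩ := exists_leaf_notMem_of_adj hL hsupp hvW huv
  exact ⟨⟨z, hzW⟩, mem_subtype.2 (hz.mem_of_mem_domSets hvz hvS hS), hvz.symm⟩

theorem mem_domSets_of_subtype_mem_domSets_induce (hL : (leafNbrSet G w).Nonempty)
    {S : Finset V} (hw : w ∈ S ∨ leafNbrSet G w ⊆ S)
    (hS : S.subtype (· ∈ (leafNbrSet G w ∪ {w})ᶜ) ∈ domSets (G.induce (leafNbrSet G w ∪ {w})ᶜ)) :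
    S ∈ domSets G := by
  rw [mem_domSets]
  intro v hvS
  by_cases hvW : v ∈ (leafNbrSet G w ∪ {w})ᶜ
  · obtain ⟨u, huS, huv⟩ := mem_domSets_induce.1 hS ⟨v, hvW⟩ (mem_subtype.not.2 hvS)
    exact ⟨u, mem_subtype.1 huS, huv⟩
  obtain hvL | rfl := Set.notMem_compl_iff.1 hvW
  · rcases hw with hw | hLS
    · exact ⟨w, hw, hvL.1⟩
    · exact absurd (hLS hvL) hvS
  · obtain ⟨v₀, hv₀⟩ := hL
    exact ⟨v₀, (hw.resolve_left hvS) hv₀, hv₀.1.symm⟩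

theorem mem_domSets_iff_of_forall_isSupport (hL : (leafNbrSet G w).Nonempty)
    (hsupp : ∀ u ∈ G.neighborSet w \ leafNbrSet G w, IsSupport G u) (S : Finset V) :
    S ∈ domSets G ↔ (w ∈ S ∨ leafNbrSet G w ⊆ S) ∧
      S.subtype (· ∈ (leafNbrSet G w ∪ {w})ᶜ) ∈ domSets (G.induce (leafNbrSet G w ∪ {w})ᶜ) := by
  refine ⟨fun hS => ⟨?_, subtype_mem_domSets_induce hL hsupp hS⟩,
    fun h => mem_domSets_of_subtype_mem_domSets_induce hL h.1 h.2⟩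
  by_cases hw : w ∈ S
  · exact Or.inl hw
  · exact Or.inr fun v hv => hv.2.mem_of_mem_domSets hv.1 hw hS

theorem domPoly_eq_mul_domPoly_induce (hL : (leafNbrSet G w).Nonempty)
    (hsupp : ∀ u ∈ G.neighborSet w \ leafNbrSet G w, IsSupport G u) (x : ℚ) :
    domPoly G x = (x ^ (leafNbrSet G w).ncard + x * (x + 1) ^ (leafNbrSet G w).ncard) *
      domPoly (G.induce (leafNbrSet G w ∪ {w})ᶜ) x := by
  set W := leafNbrSet G w ∪ {w}
  have hW : W.toFinset = insert w (leafNbrSet G w).toFinset := by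
    ext v
    simp [W]
  have hwL : w ∉ (leafNbrSet G w).toFinset := Set.mem_toFinset.not.2 fun h => G.irrefl h.1
  let f : Finset V → ℚ := fun A =>
    if w ∈ A ∨ (leafNbrSet G w).toFinset ⊆ A then x ^ A.card else 0
  let g : Finset ↥Wᶜ → ℚ := fun B => if B ∈ domSets (G.induce Wᶜ) then x ^ B.card else 0
  have hsplit : ∀ S : Finset V,
      (if S ∈ domSets G then x ^ S.card else 0) =
        f (S.filter (· ∈ W)) * g (S.subtype (· ∈ Wᶜ)) := by
    intro S
    have hcond : (w ∈ S.filter (· ∈ W) ∨ (leafNbrSet G w).toFinset ⊆ S.filter (· ∈ W)) ↔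
        (w ∈ S ∨ leafNbrSet G w ⊆ S) := by
      simp +contextual [W, Set.toFinset_subset, Set.subset_def]
    have hcard : (S.filter (· ∈ W)).card + (S.subtype (· ∈ Wᶜ)).card = S.card := by
      rw [card_subtype]
      exact card_filter_add_card_filter_not _
    rw [ite_zero_mul_ite_zero, ← pow_add, hcard]
    exact if_congr (by rw [mem_domSets_iff_of_forall_isSupport hL hsupp, hcond]) rfl rfl
  calc domPoly G x = ∑ S : Finset V, f (S.filter (· ∈ W)) * g (S.subtype (· ∈ Wᶜ)) := by
        rw [domPoly, ← Fintype.sum_ite_mem]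
        exact sum_congr rfl fun S _ => hsplit S
    _ = ∑ A ∈ W.toFinset.powerset, ∑ B, f A * g B :=
        sum_finset_eq_sum_powerset_sum_compl W fun A B => f A * g B
    _ = (∑ A ∈ W.toFinset.powerset, f A) * ∑ B, g B := (sum_mul_sum _ _ _ _).symm
    _ = _ := by
        rw [hW, sum_powerset_insert_ite_or_subset hwL, Fintype.sum_ite_mem,
          Set.ncard_eq_toFinset_card']
        rfl

end Graph

/-- Let `w` be a support vertex of `G` with exactly `t ≥ 1` leaf neighbors such that every
non-leaf neighbor of `w` is a support vertex, and let `H = G ∖ (L_G(w) ∪ {w})`.  Then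
`D_G(x) = x^t·D_H(x) + Σ_{i=0}^{t−1} C(t−1,i)·(x^{i+2}+x^{i+1})·D_H(x)`; equivalently,
`D_G(x) = (x^t + x(x+1)^t)·D_H(x)`. -/
theorem domPoly_support_vertex {V : Type*} [Fintype V] (G : SimpleGraph V) (w : V)
    (t : ℕ) (ht : 1 ≤ t) (hcard : (leafNbrSet G w).ncard = t)
    (hsupp : ∀ u ∈ G.neighborSet w \ leafNbrSet G w, IsSupport G u) (x : ℚ) :
    (domPoly G x =
        x ^ t * domPoly (G.induce ((leafNbrSet G w ∪ {w})ᶜ)) x +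
          ∑ i ∈ Finset.range t,
            ((t - 1).choose i : ℚ) * (x ^ (i + 2) + x ^ (i + 1)) *
              domPoly (G.induce ((leafNbrSet G w ∪ {w})ᶜ)) x) ∧
      domPoly G x =
        (x ^ t + x * (x + 1) ^ t) * domPoly (G.induce ((leafNbrSet G w ∪ {w})ᶜ)) x := by
  obtain ⟨n, rfl⟩ : ∃ n, t = n + 1 := ⟨t - 1, by omega⟩
  have hL : (leafNbrSet G w).Nonempty := Set.nonempty_of_ncard_ne_zero (by omega)
  have hfactor := domPoly_eq_mul_domPoly_induce hL hsupp x
  rw [hcard] at hfactor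
  refine ⟨?_, hfactor⟩
  rw [hfactor, ← sum_mul, Nat.add_sub_cancel, sum_range_choose_mul_pow_add_pow]
  ring
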